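/- Let each f_i : ℝ^d → ℝ be differentiable, convex and L-smooth, let λ ≥ 0, 0 < p < 1, F = f + λψ, and let x* = (x_1*,…,x_n*) be the minimizer of F with block average x̄*. Set 𝓛 = (1/n)·max{L/(1−p), λ/p} and σ² = (1/n²)·Σ_{i=1}^n [ (1/(1−p))·‖∇f_i(x_i*)‖² + (λ²/p)·‖x_i* − x̄*‖² ]. Then for every x ∈ ℝ^{nd}: (1−p)·‖∇f(x)/(1−p)‖² + p·‖λ∇ψ(x)/p‖² ≤ 4𝓛·(F(x) − F(x*)) + 2σ². -/

import Mathlib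

/-!
The estimator equals `∇f(x)/(1-p)` or `λ∇ψ(x)/p`, so its second moment is
`‖∇f(x)‖²/(1-p) + ‖λ∇ψ(x)‖²/p`. Write each gradient as `(∇h(x) - ∇h(x*)) + ∇h(x*)`: the terms
at `x*` produce `σ²`, and the differences are controlled by Bregman divergences. Cocoercivity of
each convex, `L`-smooth `fᵢ`, summed over the blocks, gives
`‖∇f(x) - ∇f(x*)‖² ≤ 2(L/n) D_f(x, x*)`; `ψ` is quadratic with `D_ψ(x, x*) = ψ(x - x*)`, so
`‖λ∇ψ(x) - λ∇ψ(x*)‖² = 2(λ/n) λ D_ψ(x, x*)`. Since `x*` minimizes `F`, `∇F(x*) = 0`, hence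
`D_f(x, x*) + λ D_ψ(x, x*) = F(x) - F(x*)`.
-/
open scoped BigOperators
open Finset

noncomputable section

/-- `Vec d` is the Euclidean space `ℝ^d`. -/
abbrev Vec (d : ℕ) := EuclideanSpace ℝ (Fin d)

/-- `Blk n d` is `ℝ^{nd}`, viewed as `n`-tuples of vectors in `ℝ^d`
with the Euclidean norm `‖x‖² = Σᵢ ‖xᵢ‖²`. -/
abbrev Blk (n d : ℕ) := PiLp 2 (fun _ : Fin n => Vec d)

/-- the block average `x̄ = (1/n) Σᵢ xᵢ`. -/
def blkAvg {n d : ℕ} (x : Blk n d) : Vec d := (n : ℝ)⁻¹ • ∑ i, x i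

/-- `f(x) = (1/n) Σᵢ fᵢ(xᵢ)`. -/
def fTot {n d : ℕ} (f : Fin n → Vec d → ℝ) (x : Blk n d) : ℝ :=
  (n : ℝ)⁻¹ * ∑ i, f i (x i)

/-- `ψ(x) = (1/(2n)) Σᵢ ‖xᵢ - x̄‖²`. -/
def psi {n d : ℕ} (x : Blk n d) : ℝ :=
  (2 * n : ℝ)⁻¹ * ∑ i, ‖x i - blkAvg x‖ ^ 2

/-- `F(x) = f(x) + λ ψ(x)`. -/
def FF {n d : ℕ} (f : Fin n → Vec d → ℝ) (lam : ℝ) (x : Blk n d) : ℝ :=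
  fTot f x + lam * psi x

/-- the gradient of `f`: its `i`-th block is `(1/n) ∇fᵢ(xᵢ)`, where `g i` is
the gradient of `fᵢ`. -/
def gradTot {n d : ℕ} (g : Fin n → Vec d → Vec d) (x : Blk n d) : Blk n d :=
  WithLp.toLp 2 fun i => (n : ℝ)⁻¹ • g i (x i)

/-- the gradient of `ψ`: its `i`-th block is `(1/n) (xᵢ - x̄)`. -/
def gradPsi {n d : ℕ} (x : Blk n d) : Blk n d :=
  WithLp.toLp 2 fun i => (n : ℝ)⁻¹ • (x i - blkAvg x)

open Set RealInnerProductSpace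

section InnerProductSpace

variable {E : Type*} [NormedAddCommGroup E] [InnerProductSpace ℝ E]

def bregman (f : E → ℝ) (g : E → E) (x y : E) : ℝ := f x - f y - ⟪g y, x - y⟫

lemma sq_norm_le_two_mul_sq_norm_sub_add (a b : E) :
    ‖a‖ ^ 2 ≤ 2 * ‖a - b‖ ^ 2 + 2 * ‖b‖ ^ 2 := by
  have := parallelogram_law_with_norm ℝ (a - b) b
  rw [sub_add_cancel] at this
  nlinarith [sq_nonneg ‖a - b - b‖]

lemma two_point_second_moment_le {a a₀ b b₀ : E} {p L₁ L₂ D₁ D₂ : ℝ} (hp0 : 0 < p)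
    (hp1 : p < 1) (hD₁ : 0 ≤ D₁) (hD₂ : 0 ≤ D₂) (ha : ‖a - a₀‖ ^ 2 ≤ 2 * L₁ * D₁)
    (hb : ‖b - b₀‖ ^ 2 ≤ 2 * L₂ * D₂) :
    (1 - p) * ‖(1 - p)⁻¹ • a‖ ^ 2 + p * ‖p⁻¹ • b‖ ^ 2 ≤
      4 * max (L₁ / (1 - p)) (L₂ / p) * (D₁ + D₂) +
        2 * ((1 - p)⁻¹ * ‖a₀‖ ^ 2 + p⁻¹ * ‖b₀‖ ^ 2) := by
  have hq : 0 < 1 - p := sub_pos.2 hp1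
  have hweight : ∀ {q : ℝ} (u : E), 0 < q → q * ‖q⁻¹ • u‖ ^ 2 = q⁻¹ * ‖u‖ ^ 2 := by
    intro q u hq
    rw [norm_smul, mul_pow, Real.norm_of_nonneg (inv_nonneg.2 hq.le)]
    field_simp
  set M := max (L₁ / (1 - p)) (L₂ / p)
  have h₁ : L₁ / (1 - p) * D₁ ≤ M * D₁ := mul_le_mul_of_nonneg_right (le_max_left _ _) hD₁
  have h₂ : L₂ / p * D₂ ≤ M * D₂ := mul_le_mul_of_nonneg_right (le_max_right _ _) hD₂
  have ha' : ‖a‖ ^ 2 ≤ 4 * L₁ * D₁ + 2 * ‖a₀‖ ^ 2 := by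
    linarith [sq_norm_le_two_mul_sq_norm_sub_add a a₀]
  have hb' : ‖b‖ ^ 2 ≤ 4 * L₂ * D₂ + 2 * ‖b₀‖ ^ 2 := by
    linarith [sq_norm_le_two_mul_sq_norm_sub_add b b₀]
  replace ha' := mul_le_mul_of_nonneg_left ha' (inv_nonneg.2 hq.le)
  replace hb' := mul_le_mul_of_nonneg_left hb' (inv_nonneg.2 hp0.le)
  rw [hweight a hq, hweight b hp0]
  rw [div_eq_inv_mul] at h₁ h₂
  linarith

variable [CompleteSpace E]

lemma IsLocalMin.hasGradientAt_eq_zero {f : E → ℝ} {a g : E} (h : IsLocalMin f a)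
    (hf : HasGradientAt f g a) : g = 0 := by
  simpa using h.hasFDerivAt_eq_zero (hasGradientAt_iff_hasFDerivAt.mp hf)

lemma HasGradientAt.hasDerivAt_lineMap {f : E → ℝ} {g x y : E} {t : ℝ}
    (hf : HasGradientAt f g (AffineMap.lineMap x y t)) :
    HasDerivAt (fun s => f (AffineMap.lineMap x y s)) ⟪g, y - x⟫ t :=
  (hasGradientAt_iff_hasFDerivAt.mp hf).comp_hasDerivAt t AffineMap.hasDerivAt_lineMap

lemma ConvexOn.add_inner_le_of_hasGradientAt {f : E → ℝ} {s : Set E} {g x y : E}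
    (hf : ConvexOn ℝ s f) (hx : x ∈ s) (hy : y ∈ s) (hg : HasGradientAt f g x) :
    f x + ⟪g, y - x⟫ ≤ f y := by
  have hline : ConvexOn ℝ (AffineMap.lineMap x y ⁻¹' s) (f ∘ AffineMap.lineMap x y) :=
    hf.comp_affineMap _
  have := hline.le_slope_of_hasDerivAt (by simpa using hx) (by simpa using hy) zero_lt_one
    (HasGradientAt.hasDerivAt_lineMap (t := 0) (by simpa using hg))
  simp [slope_def_field] at this
  linarith

lemma bregman_nonneg {f : E → ℝ} {g : E → E} (hconv : ConvexOn ℝ univ f)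
    (hf : ∀ x, HasGradientAt f (g x) x) (x y : E) : 0 ≤ bregman f g x y := by
  have := hconv.add_inner_le_of_hasGradientAt (mem_univ y) (mem_univ x) (hf y)
  unfold bregman
  linarith

lemma le_add_inner_add_sq_of_lipschitz_gradient {f : E → ℝ} {g : E → E} {L : ℝ}
    (hf : ∀ x, HasGradientAt f (g x) x) (hg : ∀ x y, ‖g x - g y‖ ≤ L * ‖x - y‖) (x y : E) :
    f y ≤ f x + ⟪g x, y - x⟫ + L / 2 * ‖y - x‖ ^ 2 := by
  set v := y - x
  let h : ℝ → ℝ := fun t => f (AffineMap.lineMap x y t) - t * ⟪g x, v⟫ - L / 2 * t ^ 2 * ‖v‖ ^ 2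
  have hderiv : ∀ t, HasDerivAt h (⟪g (AffineMap.lineMap x y t) - g x, v⟫ - L * t * ‖v‖ ^ 2) t := by
    intro t
    refine ((((hf _).hasDerivAt_lineMap (x := x) (y := y) (t := t)).sub
      ((hasDerivAt_id t).mul_const ⟪g x, v⟫)).sub
      (((hasDerivAt_pow 2 t).const_mul (L / 2)).mul_const (‖v‖ ^ 2))).congr_deriv ?_
    simp only [inner_sub_left]
    ring
  have hanti : AntitoneOn h (Icc 0 1) := by
    refine antitoneOn_of_hasDerivWithinAt_nonpos (convex_Icc 0 1)
      (fun t _ => (hderiv t).continuousAt.continuousWithinAt)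
      (fun t _ => (hderiv t).hasDerivWithinAt) fun t ht => sub_nonpos.2 ?_
    rw [interior_Icc] at ht
    have hstep : AffineMap.lineMap x y t - x = t • v := by
      simp [AffineMap.lineMap_apply, v]
    calc ⟪g (AffineMap.lineMap x y t) - g x, v⟫
        ≤ ‖g (AffineMap.lineMap x y t) - g x‖ * ‖v‖ := real_inner_le_norm _ _
      _ ≤ L * ‖t • v‖ * ‖v‖ := by
          rw [← hstep]; exact mul_le_mul_of_nonneg_right (hg _ _) (norm_nonneg _)
      _ = L * t * ‖v‖ ^ 2 := by
          rw [norm_smul, Real.norm_of_nonneg ht.1.le]; ring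
  have := hanti (left_mem_Icc.2 zero_le_one) (right_mem_Icc.2 zero_le_one) zero_le_one
  simp [h] at this
  linarith

lemma sq_norm_sub_le_bregman {f : E → ℝ} {g : E → E} {L : ℝ} (hconv : ConvexOn ℝ univ f)
    (hf : ∀ x, HasGradientAt f (g x) x) (hg : ∀ x y, ‖g x - g y‖ ≤ L * ‖x - y‖) (x y : E) :
    ‖g x - g y‖ ^ 2 ≤ 2 * L * bregman f g x y := by
  rcases lt_trichotomy L 0 with hL | rfl | hL
  · have hxy : x = y := by
      have := hg x y
      have : ‖x - y‖ ≤ 0 := by nlinarith [norm_nonneg (g x - g y), norm_nonneg (x - y)]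
      exact sub_eq_zero.1 (norm_le_zero_iff.1 this)
    simp [hxy, bregman]
  · have : ‖g x - g y‖ ≤ 0 := by simpa using hg x y
    simp [norm_le_zero_iff.1 this]
  · -- Compare `f y` with `f` at the gradient step `z` from `x`: the tangent line at `y` bounds
    -- `f z` from below, the descent lemma at `x` from above.
    set w := g x - g y
    set z := x - L⁻¹ • w
    have htangent := hconv.add_inner_le_of_hasGradientAt (mem_univ y) (mem_univ z) (hf y)
    have hdescent := le_add_inner_add_sq_of_lipschitz_gradient hf hg x z
    have hzy : z - y = (x - y) - L⁻¹ • w := by simp only [z]; abel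
    have hzx : z - x = -(L⁻¹ • w) := by simp only [z]; abel
    have hw : L⁻¹ * ⟪g x, w⟫ - L⁻¹ * ⟪g y, w⟫ = L⁻¹ * ‖w‖ ^ 2 := by
      rw [← mul_sub, ← inner_sub_left, real_inner_self_eq_norm_sq]
    rw [hzy, inner_sub_right, real_inner_smul_right] at htangent
    rw [hzx, inner_neg_right, real_inner_smul_right, norm_neg, norm_smul,
      Real.norm_of_nonneg (inv_nonneg.2 hL.le)] at hdescent
    have key : L⁻¹ * ‖w‖ ^ 2 / 2 ≤ bregman f g x y := by
      have : L / 2 * (L⁻¹ * ‖w‖) ^ 2 = L⁻¹ * ‖w‖ ^ 2 / 2 := by field_simp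
      unfold bregman
      linarith
    calc ‖w‖ ^ 2 = 2 * L * (L⁻¹ * ‖w‖ ^ 2 / 2) := by field_simp
      _ ≤ 2 * L * bregman f g x y := by gcongr

end InnerProductSpace

lemma PiLp.norm_toLp_smul_sq {ι F : Type*} [Fintype ι] [NormedAddCommGroup F] [NormedSpace ℝ F]
    (c : ℝ) (u : ι → F) :
    ‖(WithLp.toLp 2 fun i => c • u i : PiLp 2 fun _ : ι => F)‖ ^ 2 = c ^ 2 * ∑ i, ‖u i‖ ^ 2 := by
  simp [PiLp.norm_sq_eq_of_L2, norm_smul, mul_pow, Finset.mul_sum]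

section Blocks

variable {n d : ℕ}

lemma inner_gradTot (g : Fin n → Vec d → Vec d) (x v : Blk n d) :
    ⟪gradTot g x, v⟫ = (n : ℝ)⁻¹ * ∑ i, ⟪g i (x i), v i⟫ := by
  rw [PiLp.inner_apply, Finset.mul_sum]
  exact Finset.sum_congr rfl fun i _ => real_inner_smul_left _ _ _

lemma hasGradientAt_fTot {f : Fin n → Vec d → ℝ} {g : Fin n → Vec d → Vec d}
    (hf : ∀ i x, HasGradientAt (f i) (g i x) x) (x : Blk n d) :
    HasGradientAt (fTot f) (gradTot g x) x := by
  have hblock : ∀ i, HasFDerivAt (fun y : Blk n d => f i (y i))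
      ((InnerProductSpace.toDual ℝ (Vec d) (g i (x i))).comp (PiLp.proj 2 _ i)) x :=
    fun i => (hasGradientAt_iff_hasFDerivAt.mp (hf i (x i))).comp x (PiLp.proj 2 _ i).hasFDerivAt
  refine hasGradientAt_iff_hasFDerivAt.mpr
    (((HasFDerivAt.fun_sum fun i _ => hblock i).const_mul (n : ℝ)⁻¹).congr_fderiv ?_)
  ext v
  simp [inner_gradTot]

lemma bregman_fTot (f : Fin n → Vec d → ℝ) (g : Fin n → Vec d → Vec d) (x y : Blk n d) :
    bregman (fTot f) (gradTot g) x y = (n : ℝ)⁻¹ * ∑ i, bregman (f i) (g i) (x i) (y i) := by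
  simp only [bregman, fTot, inner_gradTot, PiLp.sub_apply, Finset.sum_sub_distrib]
  ring

lemma sq_norm_gradTot_sub_le {f : Fin n → Vec d → ℝ} {g : Fin n → Vec d → Vec d} {L : ℝ}
    (hconv : ∀ i, ConvexOn ℝ univ (f i)) (hf : ∀ i x, HasGradientAt (f i) (g i x) x)
    (hg : ∀ i x y, ‖g i x - g i y‖ ≤ L * ‖x - y‖) (x y : Blk n d) :
    ‖gradTot g x - gradTot g y‖ ^ 2 ≤ 2 * ((n : ℝ)⁻¹ * L) * bregman (fTot f) (gradTot g) x y := by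
  have hsub : gradTot g x - gradTot g y =
      WithLp.toLp 2 fun i => (n : ℝ)⁻¹ • (g i (x i) - g i (y i)) := by
    ext i : 1
    simp [gradTot, smul_sub]
  rw [hsub, PiLp.norm_toLp_smul_sq, bregman_fTot]
  calc ((n : ℝ)⁻¹) ^ 2 * ∑ i, ‖g i (x i) - g i (y i)‖ ^ 2
      ≤ ((n : ℝ)⁻¹) ^ 2 * ∑ i, 2 * L * bregman (f i) (g i) (x i) (y i) := by
        gcongr with i
        exact sq_norm_sub_le_bregman (hconv i) (hf i) (hg i) _ _
    _ = _ := by rw [← Finset.mul_sum]; ring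

lemma bregman_fTot_nonneg {f : Fin n → Vec d → ℝ} {g : Fin n → Vec d → Vec d}
    (hconv : ∀ i, ConvexOn ℝ univ (f i)) (hf : ∀ i x, HasGradientAt (f i) (g i x) x)
    (x y : Blk n d) : 0 ≤ bregman (fTot f) (gradTot g) x y := by
  rw [bregman_fTot]
  exact mul_nonneg (by positivity) (sum_nonneg fun i _ => bregman_nonneg (hconv i) (hf i) _ _)

lemma psi_nonneg (x : Blk n d) : 0 ≤ psi x := by
  unfold psi
  positivity

lemma sum_sub_blkAvg (hn : 0 < n) (x : Blk n d) : ∑ i, (x i - blkAvg x) = 0 := by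
  rw [Finset.sum_sub_distrib, Finset.sum_const, Finset.card_univ, Fintype.card_fin, blkAvg,
    ← Nat.cast_smul_eq_nsmul ℝ, smul_smul, mul_inv_cancel₀ (Nat.cast_ne_zero.2 hn.ne'), one_smul,
    sub_self]

lemma sub_apply_sub_blkAvg (x y : Blk n d) (i : Fin n) :
    (x - y) i - blkAvg (x - y) = (x i - blkAvg x) - (y i - blkAvg y) := by
  simp only [blkAvg, PiLp.sub_apply, Finset.sum_sub_distrib, smul_sub]
  abel

lemma inner_gradPsi (hn : 0 < n) (x v : Blk n d) :
    ⟪gradPsi x, v⟫ = (n : ℝ)⁻¹ * ∑ i, ⟪x i - blkAvg x, v i - blkAvg v⟫ := by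
  have hcentered : ∑ i, ⟪x i - blkAvg x, blkAvg v⟫ = 0 := by
    rw [← sum_inner, sum_sub_blkAvg hn, inner_zero_left]
  simp only [inner_sub_right, Finset.sum_sub_distrib, hcentered, sub_zero]
  rw [PiLp.inner_apply, Finset.mul_sum]
  exact Finset.sum_congr rfl fun i _ => real_inner_smul_left _ _ _

lemma hasGradientAt_psi (hn : 0 < n) (x : Blk n d) : HasGradientAt psi (gradPsi x) x := by
  set P : Fin n → Blk n d →L[ℝ] Vec d := PiLp.proj 2 _
  have havg : HasFDerivAt (blkAvg : Blk n d → Vec d) ((n : ℝ)⁻¹ • ∑ j, P j) x :=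
    (HasFDerivAt.fun_sum (u := Finset.univ) fun j _ => (P j).hasFDerivAt (x := x)).fun_const_smul _
  have hcenter : ∀ i, HasFDerivAt (fun y : Blk n d => y i - blkAvg y)
      (P i - (n : ℝ)⁻¹ • ∑ j, P j) x :=
    fun i => (P i).hasFDerivAt.sub havg
  refine hasGradientAt_iff_hasFDerivAt.mpr
    (((HasFDerivAt.fun_sum fun i _ => (hcenter i).norm_sq).const_mul (2 * n : ℝ)⁻¹).congr_fderiv ?_)
  ext v
  have hv : ∀ i, (P i - (n : ℝ)⁻¹ • ∑ j, P j) v = v i - blkAvg v := by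
    simp [P, blkAvg]
  simp only [InnerProductSpace.toDual_apply_apply, inner_gradPsi hn, smul_apply, _root_.sum_apply,
    ContinuousLinearMap.comp_apply, coe_innerSL_apply, hv, nsmul_eq_mul, Nat.cast_ofNat]
  rw [← Finset.mul_sum]
  ring

lemma bregman_psi (hn : 0 < n) (x y : Blk n d) : bregman psi gradPsi x y = psi (x - y) := by
  have hsq : ∀ a b : Vec d, ‖a - b‖ ^ 2 = ‖a‖ ^ 2 - ‖b‖ ^ 2 - 2 * ⟪b, a - b⟫ := by
    intro a b
    rw [norm_sub_sq_real, inner_sub_right, real_inner_self_eq_norm_sq, real_inner_comm]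
    ring
  simp only [bregman, psi, inner_gradPsi hn, sub_apply_sub_blkAvg, hsq, Finset.sum_sub_distrib,
    ← Finset.mul_sum]
  ring

lemma sq_norm_gradPsi_sub (hn : 0 < n) (x y : Blk n d) :
    ‖gradPsi x - gradPsi y‖ ^ 2 = 2 * (n : ℝ)⁻¹ * bregman psi gradPsi x y := by
  have hsub : gradPsi x - gradPsi y = gradPsi (x - y) := by
    ext i : 1
    rw [PiLp.sub_apply]
    simp only [gradPsi, WithLp.ofLp_toLp, ← smul_sub, sub_apply_sub_blkAvg]
  rw [hsub, gradPsi, PiLp.norm_toLp_smul_sq, bregman_psi hn, psi]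
  ring

lemma hasGradientAt_FF (hn : 0 < n) {f : Fin n → Vec d → ℝ} {g : Fin n → Vec d → Vec d}
    (hf : ∀ i x, HasGradientAt (f i) (g i x) x) (lam : ℝ) (x : Blk n d) :
    HasGradientAt (FF f lam) (gradTot g x + lam • gradPsi x) x := by
  rw [hasGradientAt_iff_hasFDerivAt, map_add, map_smul]
  exact (hasGradientAt_iff_hasFDerivAt.mp (hasGradientAt_fTot hf x)).add
    ((hasGradientAt_iff_hasFDerivAt.mp (hasGradientAt_psi hn x)).const_smul lam)

lemma FF_sub_FF_eq_bregman {f : Fin n → Vec d → ℝ} {g : Fin n → Vec d → Vec d} {lam : ℝ}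
    {y : Blk n d} (hy : gradTot g y + lam • gradPsi y = 0) (x : Blk n d) :
    FF f lam x - FF f lam y = bregman (fTot f) (gradTot g) x y + lam * bregman psi gradPsi x y := by
  have := congrArg (⟪·, x - y⟫) hy
  simp only [inner_add_left, real_inner_smul_left, inner_zero_left] at this
  simp only [bregman, FF]
  linarith

end Blocks

/-- second moment bound: if each `fᵢ` is differentiable, convex and
`L`-smooth, `λ ≥ 0`, `0 < p < 1`, `x*` minimizes `F = f + λψ`,
`𝓛 = (1/n) max{L/(1−p), λ/p}` and
`σ² = (1/n²) Σᵢ [(1/(1−p))‖∇fᵢ(xᵢ*)‖² + (λ²/p)‖xᵢ* − x̄*‖²]`, then for all `x`: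
`(1−p)‖∇f(x)/(1−p)‖² + p‖λ∇ψ(x)/p‖² ≤ 4𝓛(F(x) − F(x*)) + 2σ²`. -/
theorem stmt13 (n d : ℕ) (hn : 0 < n) (L lam p : ℝ)
    (hlam : 0 ≤ lam) (hp0 : 0 < p) (hp1 : p < 1)
    (f : Fin n → Vec d → ℝ) (g : Fin n → Vec d → Vec d)
    (hgrad : ∀ i (x : Vec d), HasGradientAt (f i) (g i x) x)
    (hconv : ∀ i, ConvexOn ℝ Set.univ (f i))
    (hsmooth : ∀ i (x y : Vec d), ‖g i x - g i y‖ ≤ L * ‖x - y‖)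
    (xstar : Blk n d) (hxstar : ∀ y : Blk n d, FF f lam xstar ≤ FF f lam y) :
    ∀ x : Blk n d,
      (1 - p) * ‖(1 - p)⁻¹ • gradTot g x‖ ^ 2 + p * ‖p⁻¹ • (lam • gradPsi x)‖ ^ 2 ≤
        4 * ((n : ℝ)⁻¹ * max (L / (1 - p)) (lam / p)) *
            (FF f lam x - FF f lam xstar) +
          2 * (((n : ℝ) ^ 2)⁻¹ *
            ∑ i, ((1 / (1 - p)) * ‖g i (xstar i)‖ ^ 2 +
              (lam ^ 2 / p) * ‖xstar i - blkAvg xstar‖ ^ 2)) := by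
  intro x
  have hstat : gradTot g xstar + lam • gradPsi xstar = 0 :=
    IsLocalMin.hasGradientAt_eq_zero (Filter.Eventually.of_forall hxstar)
      (hasGradientAt_FF hn hgrad lam xstar)
  have hψ : ‖lam • gradPsi x - lam • gradPsi xstar‖ ^ 2 ≤
      2 * ((n : ℝ)⁻¹ * lam) * (lam * bregman psi gradPsi x xstar) := by
    rw [← smul_sub, norm_smul, mul_pow, Real.norm_eq_abs, sq_abs, sq_norm_gradPsi_sub hn]
    exact le_of_eq (by ring)
  have key := two_point_second_moment_le hp0 hp1 (bregman_fTot_nonneg hconv hgrad x xstar)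
    (mul_nonneg hlam ((bregman_psi hn x xstar).symm ▸ psi_nonneg _))
    (sq_norm_gradTot_sub_le hconv hgrad hsmooth x xstar) hψ
  have hmax : max ((n : ℝ)⁻¹ * L / (1 - p)) ((n : ℝ)⁻¹ * lam / p) =
      (n : ℝ)⁻¹ * max (L / (1 - p)) (lam / p) := by
    rw [mul_max_of_nonneg _ _ (by positivity), mul_div_assoc, mul_div_assoc]
  have hσ : (1 - p)⁻¹ * ‖gradTot g xstar‖ ^ 2 + p⁻¹ * ‖lam • gradPsi xstar‖ ^ 2 =
      ((n : ℝ) ^ 2)⁻¹ * ∑ i, ((1 / (1 - p)) * ‖g i (xstar i)‖ ^ 2 +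
        (lam ^ 2 / p) * ‖xstar i - blkAvg xstar‖ ^ 2) := by
    rw [norm_smul, mul_pow, Real.norm_eq_abs, sq_abs, gradTot, gradPsi, PiLp.norm_toLp_smul_sq,
      PiLp.norm_toLp_smul_sq, Finset.sum_add_distrib, ← Finset.mul_sum, ← Finset.mul_sum]
    ring
  rwa [hmax, ← FF_sub_FF_eq_bregman hstat, hσ] at key
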